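/- arXiv:2412.15736 — 13 statements merged into one kernel-verified Lean document; each statement's English description precedes it below -/
import Mathlib

section
/- If R⋄ is smooth, then the diamond operator on stable sets is completely join-preserving and normal: for every family (Aᵢ)_{i ∈ I} of stable subsets of Z₁, ⋄((⋃ᵢ Aᵢ)'') = (⋃ᵢ ⋄Aᵢ)'', and ⋄(∅'') = ∅''. -/
namespace DFML

variable {Z1 Zd : Type*}

/-- Right polar: U' ⊆ Z∂ for U ⊆ Z₁. -/
def pol1 (P : Z1 → Zd → Prop) (U : Set Z1) : Set Zd := {y | ∀ x ∈ U, P x y}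

/-- Left polar: V' ⊆ Z₁ for V ⊆ Z∂. -/
def pol2 (P : Z1 → Zd → Prop) (V : Set Zd) : Set Z1 := {x | ∀ y ∈ V, P x y}

/-- Galois-stable subsets of Z₁. -/
def stab (P : Z1 → Zd → Prop) (A : Set Z1) : Prop := pol2 P (pol1 P A) = A

/-- Galois co-stable subsets of Z∂. -/
def costab (P : Z1 → Zd → Prop) (B : Set Zd) : Prop := pol1 P (pol2 P B) = B

/-- Preorder on Z₁: u ≼ w iff {u}' ⊆ {w}'. -/
def le1 (P : Z1 → Zd → Prop) (u w : Z1) : Prop := pol1 P {u} ⊆ pol1 P {w}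

/-- Preorder on Z∂: u ≼ w iff {u}' ⊆ {w}'. -/
def led (P : Z1 → Zd → Prop) (u w : Zd) : Prop := pol2 P {u} ⊆ pol2 P {w}

/-- Γu ⊆ Z₁. -/
def Gam1 (P : Z1 → Zd → Prop) (u : Z1) : Set Z1 := {w | le1 P u w}

/-- Γv ⊆ Z∂. -/
def Gamd (P : Z1 → Zd → Prop) (v : Zd) : Set Zd := {w | led P v w}

/-- Closure on Z₁: U''. -/
def cl1 (P : Z1 → Zd → Prop) (U : Set Z1) : Set Z1 := pol2 P (pol1 P U)

/-- Closure on Z∂: V''. -/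
def cld (P : Z1 → Zd → Prop) (V : Set Zd) : Set Zd := pol1 P (pol2 P V)

/-- Separated polarity: ≼ is antisymmetric on each sort. -/
def separated (P : Z1 → Zd → Prop) : Prop :=
  (∀ u w : Z1, le1 P u w → le1 P w u → u = w) ∧
  (∀ u w : Zd, led P u w → led P w u → u = w)

/-- Section R⋄x of a relation R⋄ ⊆ Z₁ × Z₁. -/
def diaSec (R : Z1 → Z1 → Prop) (x : Z1) : Set Z1 := {z | R z x}

/-- Galois dual R'⋄ ⊆ Z∂ × Z₁: y R'⋄ x iff y ∈ (R⋄x)'. -/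
def diaDual (P : Z1 → Zd → Prop) (R : Z1 → Z1 → Prop) (y : Zd) (x : Z1) : Prop :=
  y ∈ pol1 P (diaSec R x)

/-- Double dual R''⋄ ⊆ Z∂ × Z∂: y R''⋄ v iff v ∈ ({x | y R'⋄ x})'. -/
def diaDD (P : Z1 → Zd → Prop) (R : Z1 → Z1 → Prop) (y v : Zd) : Prop :=
  v ∈ pol1 P {x | diaDual P R y x}

/-- Image operator ◇|U = ⋃_{x ∈ U} R⋄x. -/
def diaImg (R : Z1 → Z1 → Prop) (U : Set Z1) : Set Z1 := ⋃ x ∈ U, diaSec R x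

/-- Diamond operator on stable sets: ⋄A = (◇|A)''. -/
def diaOp (P : Z1 → Zd → Prop) (R : Z1 → Z1 → Prop) (A : Set Z1) : Set Z1 :=
  cl1 P (diaImg R A)

/-- R⋄ is smooth: every section of its Galois dual is stable. -/
def diaSmooth (P : Z1 → Zd → Prop) (R : Z1 → Z1 → Prop) : Prop :=
  ∀ y : Zd, stab P {x | diaDual P R y x}

/-- Section R□v of a relation R□ ⊆ Z∂ × Z∂. -/
def boxSec (R : Zd → Zd → Prop) (v : Zd) : Set Zd := {w | R w v}

/-- Galois dual R'□ ⊆ Z₁ × Z∂: x R'□ v iff x ∈ (R□v)'. -/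
def boxDual (P : Z1 → Zd → Prop) (R : Zd → Zd → Prop) (x : Z1) (v : Zd) : Prop :=
  x ∈ pol2 P (boxSec R v)

/-- Double dual R''□ ⊆ Z₁ × Z₁: x R''□ z iff z ∈ ({v | x R'□ v})'. -/
def boxDD (P : Z1 → Zd → Prop) (R : Zd → Zd → Prop) (x z : Z1) : Prop :=
  z ∈ pol2 P {v | boxDual P R x v}

/-- Image operator ◇⁻V = ⋃_{v ∈ V} R□v. -/
def boxImg (R : Zd → Zd → Prop) (V : Set Zd) : Set Zd := ⋃ v ∈ V, boxSec R v

/-- Box operator on stable sets: □A = (◇⁻(A'))'. -/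
def boxOp (P : Z1 → Zd → Prop) (R : Zd → Zd → Prop) (A : Set Z1) : Set Z1 :=
  pol2 P (boxImg R (pol1 P A))

/-- R□ is smooth: every section of its Galois dual is co-stable. -/
def boxSmooth (P : Z1 → Zd → Prop) (R : Zd → Zd → Prop) : Prop :=
  ∀ x : Z1, costab P {v | boxDual P R x v}

end DFML

open DFML

section Aux
variable {Z1 Zd : Type*}

lemma pol1_anti (P : Z1 → Zd → Prop) {U W : Set Z1} (h : U ⊆ W) :
    pol1 P W ⊆ pol1 P U := fun y hy x hx => hy x (h hx)

lemma pol2_anti (P : Z1 → Zd → Prop) {U W : Set Zd} (h : U ⊆ W) :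
    pol2 P W ⊆ pol2 P U := fun x hx y hy => hx y (h hy)

lemma subset_cl1 (P : Z1 → Zd → Prop) (U : Set Z1) : U ⊆ cl1 P U :=
  fun x hx y hy => hy x hx

lemma pol1_cl1 (P : Z1 → Zd → Prop) (U : Set Z1) : pol1 P (cl1 P U) = pol1 P U := by
  apply subset_antisymm (pol1_anti P (subset_cl1 P U))
  intro y hy x hx
  exact hx y hy

lemma mem_pol1_diaImg (P : Z1 → Zd → Prop) (R : Z1 → Z1 → Prop) (U : Set Z1) (y : Zd) :
    y ∈ pol1 P (diaImg R U) ↔ ∀ x ∈ U, diaDual P R y x := by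
  constructor
  · intro hy x hx z hz
    exact hy z (Set.mem_biUnion hx hz)
  · intro h z hz
    rcases Set.mem_iUnion₂.1 hz with ⟨x, hx, hzx⟩
    exact h x hx z hzx

lemma pol1_diaImg_cl1 (P : Z1 → Zd → Prop) (R : Z1 → Z1 → Prop) (hS : diaSmooth P R)
    (U : Set Z1) : pol1 P (diaImg R (cl1 P U)) = pol1 P (diaImg R U) := by
  ext y
  simp only [mem_pol1_diaImg]
  constructor
  · intro h x hx; exact h x (subset_cl1 P U hx)
  · intro h x hx
    have hsub : U ⊆ {x | diaDual P R y x} := h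
    have : cl1 P U ⊆ cl1 P {x | diaDual P R y x} :=
      pol2_anti P (pol1_anti P hsub)
    rw [show cl1 P {x | diaDual P R y x} = {x | diaDual P R y x} from hS y] at this
    exact this hx

lemma pol1_iUnion' (P : Z1 → Zd → Prop) {ι : Type*} (U : ι → Set Z1) :
    pol1 P (⋃ i, U i) = ⋂ i, pol1 P (U i) := by
  ext y
  simp only [pol1, Set.mem_iInter, Set.mem_setOf_eq, Set.mem_iUnion]
  exact ⟨fun h i x hx => h x ⟨i, hx⟩, fun h x ⟨i, hx⟩ => h i x hx⟩

end Aux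


/-- if R⋄ is smooth, the diamond on stable sets is completely
join-preserving and normal: ⋄((⋃ᵢ Aᵢ)'') = (⋃ᵢ ⋄Aᵢ)'' and ⋄(∅'') = ∅''. -/
theorem stmt2 {Z1 Zd : Type*} (P : Z1 → Zd → Prop) (R : Z1 → Z1 → Prop)
    (hS : diaSmooth P R) :
    (∀ (ι : Type*) (A : ι → Set Z1), (∀ i, stab P (A i)) →
      diaOp P R (cl1 P (⋃ i, A i)) = cl1 P (⋃ i, diaOp P R (A i))) ∧
    diaOp P R (cl1 P (∅ : Set Z1)) = cl1 P (∅ : Set Z1) := by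
  have key : ∀ U : Set Z1, diaOp P R (cl1 P U) = cl1 P (diaImg R U) := by
    intro U
    show pol2 P (pol1 P (diaImg R (cl1 P U))) = pol2 P (pol1 P (diaImg R U))
    exact congrArg (pol2 P) (pol1_diaImg_cl1 P R hS U)
  constructor
  · intro ι A _
    rw [key]
    have himg : diaImg R (⋃ i, A i) = ⋃ i, diaImg R (A i) := by
      ext z
      simp only [diaImg, Set.mem_iUnion, Set.mem_iUnion₂]
      tauto
    rw [himg]
    show pol2 P (pol1 P _) = pol2 P (pol1 P _)
    rw [pol1_iUnion' P, pol1_iUnion' P]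
    exact congrArg (pol2 P)
      (Set.iInter_congr fun i => (pol1_cl1 P (diaImg R (A i))).symm)
  · rw [key]
    congr 1
    ext z
    simp [diaImg]
end

section
/- If R□ is smooth, then the box operator on stable sets is the restriction of the dual image operator generated by the double dual relation R''□: for every stable A ⊆ Z₁, □A = {x ∈ Z₁ | ∀ z ∈ Z₁, x R''□ z → z ∈ A}. -/
open DFML

/-- if R□ is smooth, the box on stable sets is the restriction of
the dual image operator of the double dual relation R''□. -/
theorem stmt4 {Z1 Zd : Type*} (P : Z1 → Zd → Prop) (R : Zd → Zd → Prop)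
    (hS : boxSmooth P R) :
    ∀ A : Set Z1, stab P A →
      boxOp P R A = {x | ∀ z : Z1, boxDD P R x z → z ∈ A} := by
  intro A hA
  ext x
  constructor
  · -- x ∈ □A → RHS
    intro hx z hz
    -- hx : ∀ w ∈ boxImg R (pol1 P A), P x w
    rw [← hA]
    intro v hv
    -- v ∈ pol1 P A; show P z v. First boxDual P R x v:
    have hdual : boxDual P R x v := by
      intro w hw
      exact hx w (Set.mem_biUnion hv hw)
    exact hz v hdual
  · intro hx
    intro w hw
    simp only [boxImg, Set.mem_iUnion] at hw
    obtain ⟨v, hv, hwv⟩ := hw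
    -- show boxDual P R x v, then since w ∈ boxSec R v, P x w
    have hB : pol1 P (pol2 P {v | boxDual P R x v}) = {v | boxDual P R x v} := hS x
    have hvB : v ∈ {v | boxDual P R x v} := by
      rw [← hB]
      intro z hz
      -- hz : z ∈ pol2 P {v | boxDual P R x v}, i.e. boxDD P R x z
      exact hv z (hx z hz)
    exact hvB w hwv
end

section
/- If R□ is smooth, then the box operator on stable sets distributes over arbitrary intersections: for every family (Aᵢ)_{i ∈ I} of stable subsets of Z₁, □(⋂ᵢ Aᵢ) = ⋂ᵢ □Aᵢ (in particular, for the empty family, □Z₁ = Z₁). -/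
open DFML

section Aux

variable {Z1 Zd : Type*} (P : Z1 → Zd → Prop)

lemma pol1_antitone {U W : Set Z1} (h : U ⊆ W) : pol1 P W ⊆ pol1 P U :=
  fun _ hy x hx => hy x (h hx)

lemma pol2_antitone {U W : Set Zd} (h : U ⊆ W) : pol2 P W ⊆ pol2 P U :=
  fun _ hy x hx => hy x (h hx)

lemma subset_pol2_pol1 (U : Set Z1) : U ⊆ pol2 P (pol1 P U) :=
  fun x hx _ hy => hy x hx

lemma subset_pol1_pol2 (V : Set Zd) : V ⊆ pol1 P (pol2 P V) :=
  fun v hv _ hx => hx v hv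

lemma mem_boxOp {R : Zd → Zd → Prop} {A : Set Z1} {x : Z1} :
    x ∈ boxOp P R A ↔ pol1 P A ⊆ {v | boxDual P R x v} := by
  constructor
  · intro h v hv w hw
    exact h w (Set.mem_biUnion hv hw)
  · intro h w hw
    rcases Set.mem_iUnion₂.1 hw with ⟨v, hv, hwv⟩
    exact h hv w hwv

lemma key {R : Zd → Zd → Prop} (hS : boxSmooth P R) {A : Set Z1} (hA : stab P A)
    {x : Z1} :
    pol1 P A ⊆ {v | boxDual P R x v} ↔ pol2 P {v | boxDual P R x v} ⊆ A := by
  constructor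
  · intro h
    calc pol2 P {v | boxDual P R x v} ⊆ pol2 P (pol1 P A) := pol2_antitone P h
    _ = A := hA
  · intro h
    calc pol1 P A ⊆ pol1 P (pol2 P {v | boxDual P R x v}) := pol1_antitone P h
    _ = {v | boxDual P R x v} := hS x

lemma stab_iInter {ι : Type*} {A : ι → Set Z1} (hA : ∀ i, stab P (A i)) :
    stab P (⋂ i, A i) := by
  apply Set.Subset.antisymm
  · intro x hx
    refine Set.mem_iInter.2 fun i => ?_
    rw [← hA i]
    intro y hy
    exact hx y (pol1_antitone P (Set.iInter_subset A i) hy)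
  · exact subset_pol2_pol1 P _

lemma stab_univ : stab P (Set.univ : Set Z1) :=
  Set.Subset.antisymm (Set.subset_univ _) (subset_pol2_pol1 P _)

end Aux

/-- if R□ is smooth, the box on stable sets distributes over
arbitrary intersections; in particular □Z₁ = Z₁. -/
theorem stmt5 {Z1 Zd : Type*} (P : Z1 → Zd → Prop) (R : Zd → Zd → Prop)
    (hS : boxSmooth P R) :
    (∀ (ι : Type*) (A : ι → Set Z1), (∀ i, stab P (A i)) →
      boxOp P R (⋂ i, A i) = ⋂ i, boxOp P R (A i)) ∧
    boxOp P R (Set.univ : Set Z1) = Set.univ := by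
  constructor
  · intro ι A hA
    ext x
    simp only [Set.mem_iInter, mem_boxOp, key P hS (stab_iInter P hA)]
    constructor
    · intro h i
      exact (key P hS (hA i)).2 (h.trans (Set.iInter_subset A i))
    · intro h
      exact Set.subset_iInter fun i => (key P hS (hA i)).1 (h i)
  · ext x
    simp only [Set.mem_univ, iff_true, mem_boxOp, key P hS (stab_univ P)]
    exact Set.subset_univ _
end

section
/- If R⋄ is smooth, then the co-stable set box operator defined by ▫B = (◇|(B'))' is the restriction of the dual image operator generated by the double dual relation R''⋄: for every co-stable B ⊆ Z∂, (◇|(B'))' = {y ∈ Z∂ | ∀ v ∈ Z∂, y R''⋄ v → v ∈ B}. -/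
open DFML

/-- if R⋄ is smooth, the co-stable box ▫B = (◇|(B'))' is the
restriction of the dual image operator of the double dual relation R''⋄. -/
theorem stmt7 {Z1 Zd : Type*} (P : Z1 → Zd → Prop) (R : Z1 → Z1 → Prop)
    (hS : diaSmooth P R) :
    ∀ B : Set Zd, costab P B →
      pol1 P (diaImg R (pol2 P B)) = {y | ∀ v : Zd, diaDD P R y v → v ∈ B} := by
  intro B hB
  ext y
  have key : y ∈ pol1 P (diaImg R (pol2 P B)) ↔ pol2 P B ⊆ {x | diaDual P R y x} := by
    constructor
    · intro h x hx z hz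
      exact h z (Set.mem_biUnion hx hz)
    · intro h z hz
      rcases Set.mem_iUnion₂.1 hz with ⟨x, hx, hzx⟩
      exact h hx z hzx
  simp only [Set.mem_setOf_eq, key]
  constructor
  · intro h v hv
    -- hv : v ∈ pol1 P {x | diaDual P R y x}; h : B' ⊆ S_y
    have : pol1 P {x | diaDual P R y x} ⊆ pol1 P (pol2 P B) := by
      intro w hw x hx
      exact hw x (h hx)
    rw [hB] at this
    exact this hv
  · intro h x hx
    -- hx : x ∈ pol2 P B; want diaDual P R y x. Use smoothness: S_y = S_y''.
    have hs := hS y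
    rw [← hs]
    intro v hv
    exact hx v (h v hv)
end

section
/- Assume: the polarity is separated; ▷ : Z₁ → Z∂ → Z∂ is monotone (w.r.t. ≼) in both arguments and T x v := Γ(x ▷ v) for x ∈ Z₁, v ∈ Z∂; T is smooth, i.e. for every u ∈ Z₁ and v ∈ Z∂ the set {x ∈ Z₁ | u ∈ (T x v)'} is stable and for every u, x ∈ Z₁ the set {v ∈ Z∂ | u ∈ (T x v)'} is co-stable; m : Z∂ → Z∂ is monotone, R□v = Γ(m v) for every v ∈ Z∂, and R□ is smooth; b : Z₁ → Z₁ satisfies {z ∈ Z₁ | ∀ p, z R''□ p → p ∈ Γx} = Γ(b x) for every x ∈ Z₁; (F6) for every stable A ⊆ Z₁, □A ⊆ (⋃_{x ∈ A} □(Γx))''; and (FK) m(x ▷ y) ≼ (b x) ▷ (m y) for all x ∈ Z₁, y ∈ Z∂. Then the K-axiom holds in the lattice of stable sets: for all stable A, C ⊆ Z₁, □(A ⇒ C) ⊆ (□A) ⇒ (□C). -/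
open DFML

/-- in a separated, refined K-frame the K-axiom holds on stable
sets: □(A ⇒ C) ⊆ (□A) ⇒ (□C), where A ⇒ C = (⋃_{x∈A, v∈C'} T x v)' and
T x v = Γ(x ▷ v). -/
theorem stmt8 {Z1 Zd : Type*} (P : Z1 → Zd → Prop)
    (sep : separated P)
    (tr : Z1 → Zd → Zd)
    (trMono1 : ∀ (v : Zd) (x x' : Z1), le1 P x x' → led P (tr x v) (tr x' v))
    (trMono2 : ∀ (x : Z1) (v v' : Zd), led P v v' → led P (tr x v) (tr x v'))
    (trSmooth1 : ∀ (u : Z1) (v : Zd), stab P {x | u ∈ pol2 P (Gamd P (tr x v))})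
    (trSmooth2 : ∀ (u x : Z1), costab P {v | u ∈ pol2 P (Gamd P (tr x v))})
    (m : Zd → Zd) (mMono : ∀ v v' : Zd, led P v v' → led P (m v) (m v'))
    (R : Zd → Zd → Prop) (hR : ∀ v : Zd, boxSec R v = Gamd P (m v))
    (hRsmooth : boxSmooth P R)
    (b : Z1 → Z1)
    (hb : ∀ x : Z1, {z | ∀ p : Z1, boxDD P R z p → p ∈ Gam1 P x} = Gam1 P (b x))
    (F6 : ∀ A : Set Z1, stab P A →
      boxOp P R A ⊆ cl1 P (⋃ x ∈ A, boxOp P R (Gam1 P x)))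
    (FK : ∀ (x : Z1) (y : Zd), led P (m (tr x y)) (tr (b x) (m y))) :
    ∀ A C : Set Z1, stab P A → stab P C →
      boxOp P R (pol2 P (⋃ x ∈ A, ⋃ v ∈ pol1 P C, Gamd P (tr x v))) ⊆
        pol2 P (⋃ x ∈ boxOp P R A, ⋃ v ∈ pol1 P (boxOp P R C), Gamd P (tr x v)) := by
  classical
  have led_refl : ∀ t : Zd, led P t t := fun _ => Set.Subset.refl _
  have hled : ∀ (z : Z1) {t t' : Zd}, led P t t' → P z t → P z t' := by
    intro z t t' h hp
    have hz : z ∈ pol2 P {t} := by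
      intro y hy
      rw [Set.mem_singleton_iff] at hy
      rw [hy]; exact hp
    exact h hz t' rfl
  have hle1 : ∀ {x x' : Z1} (v : Zd), le1 P x x' → P x v → P x' v := by
    intro x x' v h hp
    have hv : v ∈ pol1 P {x} := by
      intro z hz
      rw [Set.mem_singleton_iff] at hz
      rw [hz]; exact hp
    exact h hv x' rfl
  have mem_pol2_gamd : ∀ (z : Z1) (t : Zd), P z t → z ∈ pol2 P (Gamd P t) := by
    intro z t hp w hw
    exact hled z hw hp
  have pol1_anti : ∀ {U V : Set Z1}, U ⊆ V → pol1 P V ⊆ pol1 P U :=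
    fun h y hy x hx => hy x (h hx)
  have pol2_anti : ∀ {U V : Set Zd}, U ⊆ V → pol2 P V ⊆ pol2 P U :=
    fun h x hx y hy => hx y (h hy)
  have sub_cld : ∀ V : Set Zd, V ⊆ pol1 P (pol2 P V) :=
    fun V y hy x hx => hx y hy
  intro A C hA hC u hu
  have key : ∀ x ∈ boxOp P R A, ∀ v ∈ pol1 P (boxOp P R C), P u (tr x v) := by
    intro x hx v hv
    -- Step: any x' ∈ □Γa with a ∈ A satisfies P u (tr x' v)
    have step : ∀ a ∈ A, ∀ x' ∈ boxOp P R (Gam1 P a), P u (tr x' v) := by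
      intro a ha x' hx'
      -- x' ∈ Γ(b a)
      have lba : le1 P (b a) x' := by
        have hmemΓ : x' ∈ Gam1 P (b a) := by
          rw [← hb a]
          intro p hp
          intro w hw
          have haw : P a w := hw a rfl
          have hbd : boxDual P R x' w := by
            intro y hy
            have hwΓ : w ∈ pol1 P (Gam1 P a) := fun z hz => hle1 w hz haw
            exact hx' y (Set.mem_biUnion hwΓ hy)
          have hpw : P p w := hp w hbd
          intro z hz
          rw [Set.mem_singleton_iff] at hz
          rw [hz]; exact hpw
        exact hmemΓ
      -- S' = {y | u ∈ (Γ(tr x' y))'} is co-stable; show v ∈ S'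
      have hS' : pol1 P (pol2 P {y | u ∈ pol2 P (Gamd P (tr x' y))}) =
          {y | u ∈ pol2 P (Gamd P (tr x' y))} := trSmooth2 u x'
      have himg : boxImg R (pol1 P C) ⊆ {y | u ∈ pol2 P (Gamd P (tr x' y))} := by
        intro w' hw'
        simp only [boxImg, Set.mem_iUnion] at hw'
        obtain ⟨c, hc, hmem⟩ := hw'
        rw [hR c] at hmem
        -- hmem : w' ∈ Gamd P (m c), i.e. led (m c) w'
        have h1 : P u (m (tr a c)) := by
          have hac : tr a c ∈
              pol1 P (pol2 P (⋃ x ∈ A, ⋃ v ∈ pol1 P C, Gamd P (tr x v))) :=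
            sub_cld _ (Set.mem_biUnion ha (Set.mem_biUnion hc (led_refl (tr a c))))
          have hmm : m (tr a c) ∈ boxSec R (tr a c) := by
            rw [hR]; exact led_refl _
          exact hu _ (Set.mem_biUnion hac hmm)
        have h2 : P u (tr (b a) (m c)) := hled u (FK a c) h1
        have h3 : P u (tr x' (m c)) := hled u (trMono1 (m c) (b a) x' lba) h2
        have h4 : P u (tr x' w') := hled u (trMono2 x' (m c) w' hmem) h3
        exact mem_pol2_gamd u _ h4
      have hvS' : v ∈ {y | u ∈ pol2 P (Gamd P (tr x' y))} := by
        have hv' : v ∈ pol1 P (pol2 P (boxImg R (pol1 P C))) := hv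
        have := pol1_anti (pol2_anti himg) hv'
        rwa [hS'] at this
      exact hvS' (tr x' v) (led_refl _)
    -- Now use F6 and stability of S = {x' | u ∈ (Γ(tr x' v))'}
    have hS : pol2 P (pol1 P {x' | u ∈ pol2 P (Gamd P (tr x' v))}) =
        {x' | u ∈ pol2 P (Gamd P (tr x' v))} := trSmooth1 u v
    have hsub : (⋃ a ∈ A, boxOp P R (Gam1 P a)) ⊆
        {x' | u ∈ pol2 P (Gamd P (tr x' v))} := by
      intro z hz
      simp only [Set.mem_iUnion] at hz
      obtain ⟨a, ha, hz⟩ := hz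
      exact mem_pol2_gamd _ _ (step a ha z hz)
    have h6 := F6 A hA hx
    have hxS : x ∈ {x' | u ∈ pol2 P (Gamd P (tr x' v))} := by
      have := pol2_anti (pol1_anti hsub) h6
      rwa [hS] at this
    exact hxS (tr x v) (led_refl _)
  intro w hw
  simp only [Set.mem_iUnion] at hw
  obtain ⟨x, hx, v, hv, hw'⟩ := hw
  exact hled u hw' (key x hx v hv)
end

section
/- Assume: the polarity is separated; m : Z∂ → Z∂ is monotone, R□v = Γ(m v) for every v ∈ Z∂, and R□ is smooth; b : Z₁ → Z₁ satisfies S□x := {z ∈ Z₁ | ∀ p, z R''□ p → p ∈ Γx} = Γ(b x) for every x ∈ Z₁; d : Z₁ → Z₁ is monotone and R⋄x = Γ(d x) for every x ∈ Z₁. Then the following are equivalent: (1) S□x ⊆ R⋄x for all x ∈ Z₁; (2) d x ≼ b x for all x ∈ Z₁; (3) (b x) R⋄ x for all x ∈ Z₁; (4) □(Γx) ⊆ ◇|(Γx) for all x ∈ Z₁. -/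
open DFML

section Aux

variable {Z1 Zd : Type*} (P : Z1 → Zd → Prop)

lemma pol1_Gam1 (x : Z1) : pol1 P (Gam1 P x) = pol1 P {x} := by
  ext y
  constructor
  · intro h y' hy'
    rw [Set.mem_singleton_iff] at hy'
    rw [hy']
    exact h x (Set.Subset.refl _)
  · intro h w hw
    exact hw h w rfl

lemma pol2_Gamd (v : Zd) : pol2 P (Gamd P v) = pol2 P {v} := by
  ext z
  constructor
  · intro h y hy
    rw [Set.mem_singleton_iff] at hy
    rw [hy]
    exact h v (Set.Subset.refl _)
  · intro h w hw
    exact hw h w rfl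

lemma boxOp_Gam1 (m : Zd → Zd) (R : Zd → Zd → Prop)
    (hR : ∀ v : Zd, boxSec R v = Gamd P (m v)) (x : Z1) :
    boxOp P R (Gam1 P x) = {z | ∀ v : Zd, P x v → P z (m v)} := by
  ext z
  simp only [boxOp, pol1_Gam1, Set.mem_setOf_eq]
  constructor
  · intro h v hxv
    have : m v ∈ boxImg R (pol1 P {x}) := by
      refine Set.mem_biUnion (show v ∈ pol1 P {x} from fun _ h' => h' ▸ hxv) ?_
      rw [hR]; exact fun _ h' => h'
    exact h _ this
  · intro h w hw
    rcases Set.mem_iUnion₂.mp hw with ⟨v, hv, hwv⟩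
    rw [hR] at hwv
    have hxv : P x v := hv x rfl
    have hz : z ∈ pol2 P {m v} := by
      intro y hy
      rw [Set.mem_singleton_iff] at hy
      rw [hy]
      exact h v hxv
    exact hwv hz w rfl

lemma S_eq (m : Zd → Zd) (R : Zd → Zd → Prop)
    (hR : ∀ v : Zd, boxSec R v = Gamd P (m v))
    (hRsmooth : boxSmooth P R) (x : Z1) :
    {z | ∀ p : Z1, boxDD P R z p → p ∈ Gam1 P x}
      = {z | ∀ v : Zd, P x v → P z (m v)} := by
  have hdual : ∀ (z : Z1) (v : Zd), boxDual P R z v ↔ P z (m v) := by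
    intro z v
    unfold boxDual
    rw [hR, pol2_Gamd]
    constructor
    · intro h; exact h (m v) rfl
    · intro h y hy; exact hy ▸ h
  ext z
  simp only [Set.mem_setOf_eq]
  constructor
  · intro h v hxv
    have hcs := hRsmooth z
    unfold costab at hcs
    rw [show {v | boxDual P R z v} = {w | P z (m w)} from Set.ext fun v => hdual z v] at hcs
    have hv : v ∈ pol1 P (pol2 P {w | P z (m w)}) := by
      intro p hp
      have hdd : boxDD P R z p := by
        intro v' hv'
        exact hp v' ((hdual z v').mp hv')
      have hle : le1 P x p := h p hdd
      have : v ∈ pol1 P {x} := by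
        intro x' hx'
        rw [Set.mem_singleton_iff] at hx'
        rw [hx']
        exact hxv
      exact hle this p rfl
    rw [hcs] at hv
    exact hv
  · intro h p hp
    intro y hxy
    have hxy' : P x y := hxy x rfl
    have hzmy : P z (m y) := h y hxy'
    have hpy : P p y := hp y ((hdual z y).mpr hzmy)
    intro p' hp'
    exact hp' ▸ hpy

lemma diaImg_Gam1 (d : Z1 → Z1) (dMono : ∀ x x' : Z1, le1 P x x' → le1 P (d x) (d x'))
    (Rd : Z1 → Z1 → Prop) (hRd : ∀ x : Z1, diaSec Rd x = Gam1 P (d x)) (x : Z1) :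
    diaImg Rd (Gam1 P x) = Gam1 P (d x) := by
  ext z
  constructor
  · intro hz
    rcases Set.mem_iUnion₂.mp hz with ⟨w, hw, hzw⟩
    rw [hRd] at hzw
    exact (dMono x w hw).trans hzw
  · intro hz
    refine Set.mem_biUnion (show x ∈ Gam1 P x from fun _ h => h) ?_
    rw [hRd]; exact hz

end Aux

/-- equivalent formulations of the D-frame condition. -/
theorem stmt9 {Z1 Zd : Type*} (P : Z1 → Zd → Prop)
    (sep : separated P)
    (m : Zd → Zd) (mMono : ∀ v v' : Zd, led P v v' → led P (m v) (m v'))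
    (R : Zd → Zd → Prop) (hR : ∀ v : Zd, boxSec R v = Gamd P (m v))
    (hRsmooth : boxSmooth P R)
    (b : Z1 → Z1)
    (hb : ∀ x : Z1, {z | ∀ p : Z1, boxDD P R z p → p ∈ Gam1 P x} = Gam1 P (b x))
    (d : Z1 → Z1) (dMono : ∀ x x' : Z1, le1 P x x' → le1 P (d x) (d x'))
    (Rd : Z1 → Z1 → Prop) (hRd : ∀ x : Z1, diaSec Rd x = Gam1 P (d x)) :
    List.TFAE
      [ ∀ x : Z1, {z | ∀ p : Z1, boxDD P R z p → p ∈ Gam1 P x} ⊆ diaSec Rd x,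
        ∀ x : Z1, le1 P (d x) (b x),
        ∀ x : Z1, Rd (b x) x,
        ∀ x : Z1, boxOp P R (Gam1 P x) ⊆ diaImg Rd (Gam1 P x) ] := by
  tfae_have 1 ↔ 2 := by
    constructor
    · intro h x
      have hbx : b x ∈ Gam1 P (b x) := Set.Subset.refl _
      have := h x (by rw [hb x]; exact hbx)
      rw [hRd x] at this
      exact this
    · intro h x z hz
      rw [hb x] at hz
      rw [hRd x]
      exact (h x).trans hz
  tfae_have 2 ↔ 3 := by
    constructor
    · intro h x
      have : b x ∈ Gam1 P (d x) := h x
      rw [← hRd x] at this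
      exact this
    · intro h x
      have : b x ∈ diaSec Rd x := h x
      rw [hRd x] at this
      exact this
  tfae_have 1 ↔ 4 := by
    have key : ∀ x : Z1, ({z | ∀ p : Z1, boxDD P R z p → p ∈ Gam1 P x} ⊆ diaSec Rd x)
        ↔ (boxOp P R (Gam1 P x) ⊆ diaImg Rd (Gam1 P x)) := by
      intro x
      rw [S_eq P m R hR hRsmooth x, boxOp_Gam1 P m R hR x,
        diaImg_Gam1 P d dMono Rd hRd x, hRd x]
    exact ⟨fun h x => (key x).mp (h x), fun h x => (key x).mpr (h x)⟩
  tfae_finish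
end

section
/- Assume the polarity is separated, m : Z∂ → Z∂ is monotone, R□v = Γ(m v) for every v ∈ Z∂, and R□ is smooth. Then the following are equivalent: (1) □A ⊆ A for every stable A ⊆ Z₁; (2) □({y}') ⊆ {y}' for every y ∈ Z∂; (3) m y ≼ y for every y ∈ Z∂; (4) R□ is reflexive (y R□ y for all y ∈ Z∂); (5) R''□ is reflexive (x R''□ x for all x ∈ Z₁). -/
open DFML

/-- equivalent formulations of the T-axiom for box. -/
theorem stmt11 {Z1 Zd : Type*} (P : Z1 → Zd → Prop)
    (sep : separated P)
    (m : Zd → Zd) (mMono : ∀ v v' : Zd, led P v v' → led P (m v) (m v'))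
    (R : Zd → Zd → Prop) (hR : ∀ v : Zd, boxSec R v = Gamd P (m v))
    (hRsmooth : boxSmooth P R) :
    List.TFAE
      [ ∀ A : Set Z1, stab P A → boxOp P R A ⊆ A,
        ∀ y : Zd, boxOp P R (pol2 P {y}) ⊆ pol2 P {y},
        ∀ y : Zd, led P (m y) y,
        ∀ y : Zd, R y y,
        ∀ x : Z1, boxDD P R x x ] := by
  -- basic facts
  have hRiff : ∀ w v : Zd, R w v ↔ led P (m v) w := by
    intro w v
    have := hR v
    constructor
    · intro h
      have : w ∈ Gamd P (m v) := this ▸ h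
      exact this
    · intro h
      have hw : w ∈ boxSec R v := this ▸ (h : w ∈ Gamd P (m v))
      exact hw
  have hled : ∀ u w : Zd, led P u w ↔ ∀ x : Z1, P x u → P x w := by
    intro u w
    constructor
    · intro h x hx
      have : x ∈ pol2 P {u} := by intro y hy; rw [Set.mem_singleton_iff] at hy; rw [hy]; exact hx
      exact h this w rfl
    · intro h x hx
      intro y hy
      rw [Set.mem_singleton_iff] at hy; subst hy
      exact h x (hx u rfl)
  have hledrefl : ∀ u : Zd, led P u u := fun u => le_refl _
  have hBoxDual : ∀ (x : Z1) (v : Zd), boxDual P R x v ↔ P x (m v) := by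
    intro x v
    constructor
    · intro h
      exact h (m v) ((hRiff (m v) v).2 (hledrefl (m v)))
    · intro h w hw
      have hw' : led P (m v) w := (hRiff w v).1 hw
      exact (hled (m v) w).1 hw' x h
  tfae_have 1 → 2 := by
    intro h1 y
    apply h1
    -- pol2 is stable
    unfold stab
    apply subset_antisymm
    · intro x hx y' hy'
      exact hx y' (by intro z hz; exact hz y' hy')
    · intro x hx w hw
      exact hw x hx
  tfae_have 2 → 3 := by
    intro h2 y
    rw [hled]
    intro x hx
    have hmem : x ∈ boxOp P R (pol2 P {y}) := by
      intro w hw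
      simp only [boxImg, Set.mem_iUnion] at hw
      obtain ⟨v, hv, hwv⟩ := hw
      have hyv : led P y v := by
        rw [hled]
        intro x' hx'
        exact hv x' (by intro z hz; rw [Set.mem_singleton_iff] at hz; rw [hz]; exact hx')
      have hmv : led P (m y) (m v) := mMono y v hyv
      have hmvw : led P (m v) w := (hRiff w v).1 hwv
      exact (hled (m v) w).1 hmvw x ((hled (m y) (m v)).1 hmv x hx)
    exact h2 y hmem y rfl
  tfae_have 3 → 1 := by
    intro h3 A hA x hx
    rw [← hA]
    intro v hv
    apply hx
    simp only [boxImg, Set.mem_iUnion]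
    exact ⟨v, hv, (hRiff v v).2 (h3 v)⟩
  tfae_have 3 ↔ 4 := by
    constructor
    · intro h3 y; exact (hRiff y y).2 (h3 y)
    · intro h4 y; exact (hRiff y y).1 (h4 y)
  tfae_have 3 ↔ 5 := by
    constructor
    · intro h3 x v hv
      exact (hled (m v) v).1 (h3 v) x ((hBoxDual x v).1 hv)
    · intro h5 y
      rw [hled]
      intro x hx
      exact h5 x y ((hBoxDual x y).2 hx)
  tfae_finish
end

section
/- Assume the polarity is separated, m : Z∂ → Z∂ is monotone, R□v = Γ(m v) for every v ∈ Z∂, and R□ is smooth. Then the following are equivalent: (1) □A ⊆ □(□A) for every stable A ⊆ Z₁; (2) □({y}') ⊆ □(□({y}')) for every y ∈ Z∂; (3) m y ≼ m(m y) for every y ∈ Z∂; (4) R□ is transitive; (5) R''□ is transitive. -/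
open DFML

/-- equivalent formulations of the S4-axiom for box. -/
theorem stmt12 {Z1 Zd : Type*} (P : Z1 → Zd → Prop)
    (sep : separated P)
    (m : Zd → Zd) (mMono : ∀ v v' : Zd, led P v v' → led P (m v) (m v'))
    (R : Zd → Zd → Prop) (hR : ∀ v : Zd, boxSec R v = Gamd P (m v))
    (hRsmooth : boxSmooth P R) :
    List.TFAE
      [ ∀ A : Set Z1, stab P A → boxOp P R A ⊆ boxOp P R (boxOp P R A),
        ∀ y : Zd, boxOp P R (pol2 P {y}) ⊆ boxOp P R (boxOp P R (pol2 P {y})),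
        ∀ y : Zd, led P (m y) (m (m y)),
        ∀ y v w : Zd, R y v → R v w → R y w,
        ∀ x u z : Z1, boxDD P R x u → boxDD P R u z → boxDD P R x z ] := by

  -- R in terms of led
  have hRiff : ∀ w v : Zd, R w v ↔ led P (m v) w := by
    intro w v
    constructor
    · intro h
      have : w ∈ boxSec R v := h
      rw [hR] at this; exact this
    · intro h
      have : w ∈ Gamd P (m v) := h
      rw [← hR] at this; exact this
  -- membership in pol2 of a singleton
  have hmem : ∀ (x : Z1) (u : Zd), x ∈ pol2 P {u} ↔ P x u := by
    intro x u
    constructor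
    · intro h; exact h u rfl
    · intro h w hw
      rw [Set.mem_singleton_iff] at hw; subst hw; exact h
  -- boxDual in terms of P and m
  have hDual : ∀ (x : Z1) (v : Zd), boxDual P R x v ↔ P x (m v) := by
    intro x v
    constructor
    · intro h
      exact h (m v) (by rw [hR]; exact Set.Subset.refl _)
    · intro h w hw
      rw [hR] at hw
      exact (hmem x w).mp (hw ((hmem x (m v)).mpr h))
  -- membership in boxOp
  have hBox : ∀ (A : Set Z1) (x : Z1),
      x ∈ boxOp P R A ↔ ∀ v ∈ pol1 P A, P x (m v) := by
    intro A x
    constructor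
    · intro h v hv
      exact h (m v) (Set.mem_biUnion hv (by rw [hR]; exact Set.Subset.refl _))
    · intro h w hw
      obtain ⟨v, hv, hwv⟩ := Set.mem_iUnion₂.mp hw
      rw [hR] at hwv
      exact (hmem x w).mp (hwv ((hmem x (m v)).mpr (h v hv)))
  -- boxDD in terms of P and m
  have hDD : ∀ x z : Z1, boxDD P R x z ↔ ∀ v, P x (m v) → P z v := by
    intro x z
    constructor
    · intro h v hv
      exact h v ((hDual x v).mpr hv)
    · intro h v hv
      exact h v ((hDual x v).mp hv)
  -- pol2 of anything is stable
  have stab_pol2 : ∀ V : Set Zd, stab P (pol2 P V) := by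
    intro V
    apply Set.Subset.antisymm
    · intro x hx y hy
      exact hx y (fun z hz => hz y hy)
    · intro x hx y hy
      exact hy x hx
  -- Kripke characterization of boxOp on stable sets (uses smoothness)
  have kripke : ∀ (A : Set Z1), stab P A →
      ∀ x : Z1, (x ∈ boxOp P R A ↔ ∀ z, boxDD P R x z → z ∈ A) := by
    intro A hA x
    constructor
    · intro hx z hz
      rw [← hA]
      intro v hv
      exact (hDD x z).mp hz v ((hBox A x).mp hx v hv)
    · intro h
      rw [hBox]
      intro v hv
      have hsub : pol2 P {v' | boxDual P R x v'} ⊆ A := fun z hz => h z hz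
      have hv' : v ∈ {v' | boxDual P R x v'} := by
        rw [← hRsmooth x]
        intro u hu
        exact hv u (hsub hu)
      exact (hDual x v).mp hv'
  -- boxOp of pol2 of a singleton
  have key : ∀ y : Zd, boxOp P R (pol2 P {y}) = pol2 P {m y} := by
    intro y
    ext x
    rw [hBox, hmem]
    constructor
    · intro h
      exact h y (fun u hu => hu y rfl)
    · intro h v hv
      have hyv : led P y v := by
        intro u hu
        exact (hmem u v).mpr (hv u hu)
      exact (hmem x (m v)).mp (mMono y v hyv ((hmem x (m y)).mpr h))
  tfae_have 1 → 2 := by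
    intro h y
    exact h _ (stab_pol2 {y})
  tfae_have 2 → 3 := by
    intro h y
    have := h y
    rw [key, key] at this
    exact this
  tfae_have 3 → 4 := by
    intro h y v w hyv hvw
    have h1 := (hRiff y v).mp hyv
    have h2 := (hRiff v w).mp hvw
    exact (hRiff y w).mpr (((h w).trans (mMono (m w) v h2)).trans h1)
  tfae_have 4 → 3 := by
    intro h y
    have r1 : R (m (m y)) (m y) := (hRiff _ _).mpr (Set.Subset.refl _)
    have r2 : R (m y) y := (hRiff _ _).mpr (Set.Subset.refl _)
    exact (hRiff _ _).mp (h (m (m y)) (m y) y r1 r2)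
  tfae_have 3 → 5 := by
    intro h3 x u z hxu huz
    rw [hDD]
    intro v hv
    have hv2 : P x (m (m v)) := (hmem x (m (m v))).mp (h3 v ((hmem x (m v)).mpr hv))
    exact (hDD u z).mp huz v ((hDD x u).mp hxu (m v) hv2)
  tfae_have 5 → 1 := by
    intro h5 A hA x hx
    rw [kripke (boxOp P R A) (stab_pol2 _)]
    intro z hxz
    rw [kripke _ hA]
    intro u hzu
    exact (kripke A hA x).mp hx u (h5 x z u hxz hzu)
  tfae_finish
end

section
/- Assume the polarity is separated, d : Z₁ → Z₁ is monotone, R⋄x = Γ(d x) for every x ∈ Z₁, and R⋄ is smooth. Then the following are equivalent: (1) A ⊆ ⋄A for every stable A ⊆ Z₁; (2) Γx ⊆ ⋄(Γx) for every x ∈ Z₁; (3) d x ≼ x for every x ∈ Z₁; (4) R⋄ is reflexive (x R⋄ x for all x ∈ Z₁); (5) R''⋄ is reflexive (y R''⋄ y for all y ∈ Z∂). -/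
open DFML

/-- equivalent formulations of the T-axiom for diamond. -/
theorem stmt13 {Z1 Zd : Type*} (P : Z1 → Zd → Prop)
    (sep : separated P)
    (d : Z1 → Z1) (dMono : ∀ x x' : Z1, le1 P x x' → le1 P (d x) (d x'))
    (Rd : Z1 → Z1 → Prop) (hRd : ∀ x : Z1, diaSec Rd x = Gam1 P (d x))
    (hRdsmooth : diaSmooth P Rd) :
    List.TFAE
      [ ∀ A : Set Z1, stab P A → A ⊆ diaOp P Rd A,
        ∀ x : Z1, Gam1 P x ⊆ diaOp P Rd (Gam1 P x),
        ∀ x : Z1, le1 P (d x) x,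
        ∀ x : Z1, Rd x x,
        ∀ y : Zd, diaDD P Rd y y ] := by

  -- auxiliary facts
  have hmem1 : ∀ (u : Z1) (y : Zd), y ∈ pol1 P {u} ↔ P u y := by
    intro u y; simp [pol1]
  have hRdmem : ∀ z x : Z1, Rd z x ↔ le1 P (d x) z := by
    intro z x
    have h := hRd x
    constructor
    · intro hh; have : z ∈ Gam1 P (d x) := h ▸ hh; exact this
    · intro hh; have hz : z ∈ diaSec Rd x := h ▸ hh; exact hz
  have hdual : ∀ (y : Zd) (x : Z1), diaDual P Rd y x ↔ P (d x) y := by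
    intro y x
    constructor
    · intro h
      exact h (d x) ((hRdmem (d x) x).mpr (fun _ h => h))
    · intro h z hz
      have hle : le1 P (d x) z := (hRdmem z x).mp hz
      exact (hmem1 z y).mp (hle ((hmem1 (d x) y).mpr h))
  have hstabGam : ∀ x : Z1, stab P (Gam1 P x) := by
    intro x
    unfold stab
    apply subset_antisymm
    · intro w hw y hy
      apply (hmem1 w y).mpr
      apply hw y
      intro z hz
      exact (hmem1 z y).mp (hz hy)
    · intro w hw y hy
      exact hy w hw
  tfae_have 3 ↔ 4 := by
    constructor
    · intro h x; exact (hRdmem x x).mpr (h x)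
    · intro h x; exact (hRdmem x x).mp (h x)
  tfae_have 4 → 1 := by
    intro h A _ x hx y hy
    exact hy x ⟨diaSec Rd x, ⟨x, by simp [hx]⟩, h x⟩
  tfae_have 1 → 2 := by
    intro h x
    exact h _ (hstabGam x)
  tfae_have 2 → 3 := by
    intro h x y hy
    have hx : x ∈ Gam1 P x := fun _ h => h
    have hx2 := h x hx
    apply (hmem1 x y).mpr
    apply (hx2 y)
    intro z hz
    simp only [diaImg, Set.mem_iUnion] at hz
    obtain ⟨w, hwx, hzw⟩ := hz
    have hzS : le1 P (d w) z := (hRdmem z w).mp hzw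
    have h1 : le1 P (d x) (d w) := dMono x w hwx
    have h2 : le1 P (d x) z := fun u hu => hzS (h1 hu)
    exact (hmem1 z y).mp (h2 hy)
  tfae_have 3 ↔ 5 := by
    constructor
    · intro h y x hx
      rw [Set.mem_setOf_eq, hdual] at hx
      exact (hmem1 x y).mp (h x ((hmem1 (d x) y).mpr hx))
    · intro h x y hy
      exact (hmem1 x y).mpr (h y x ((hdual y x).mpr ((hmem1 (d x) y).mp hy)))
  tfae_finish
end

section
/- Assume the polarity is separated, m : Z∂ → Z∂ is a function with R□v = Γ(m v) for every v ∈ Z∂, d : Z₁ → Z₁ is a function with R⋄x = Γ(d x) for every x ∈ Z₁, and the frame satisfies axiom (FB): for all x ∈ Z₁ and y ∈ Z∂, x ⊥ m y if and only if (d x) ⊥ y. Then the box and diamond operators on stable sets are residuated: for all stable A, C ⊆ Z₁, A ⊆ □C if and only if ⋄A ⊆ C. -/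
open DFML

/-- under axiom (FB), box and diamond are residuated on stable
sets: A ⊆ □C iff ⋄A ⊆ C. -/
theorem stmt15 {Z1 Zd : Type*} (P : Z1 → Zd → Prop)
    (sep : separated P)
    (m : Zd → Zd) (R : Zd → Zd → Prop) (hR : ∀ v : Zd, boxSec R v = Gamd P (m v))
    (d : Z1 → Z1) (Rd : Z1 → Z1 → Prop) (hRd : ∀ x : Z1, diaSec Rd x = Gam1 P (d x))
    (FB : ∀ (x : Z1) (y : Zd), P x (m y) ↔ P (d x) y) :
    ∀ A C : Set Z1, stab P A → stab P C →
      (A ⊆ boxOp P R C ↔ diaOp P Rd A ⊆ C) := by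
  intro A C hA hC
  have key : (A ⊆ boxOp P R C) ↔ ∀ x ∈ A, ∀ v ∈ pol1 P C, P (d x) v := by
    constructor
    · intro h x hx v hv
      have hw : m v ∈ boxImg R (pol1 P C) := by
        refine Set.mem_iUnion₂.mpr ⟨v, hv, ?_⟩
        rw [hR]
        exact fun z hz => hz
      exact (FB x v).mp (h hx (m v) hw)
    · intro h x hx w hw
      rcases Set.mem_iUnion₂.mp hw with ⟨v, hv, hwv⟩
      rw [hR] at hwv
      have hxm : P x (m v) := (FB x v).mpr (h x hx v hv)
      exact hwv (fun y hy => by cases hy; exact hxm) w rfl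
  rw [key]
  constructor
  · intro h z hz
    have hsub : diaImg Rd A ⊆ C := by
      intro z hz
      rcases Set.mem_iUnion₂.mp hz with ⟨x, hx, hzx⟩
      rw [hRd] at hzx
      rw [← hC]
      intro v hv
      exact hzx (fun u hu => by cases hu; exact h x hx v hv) z rfl
    have : diaOp P Rd A ⊆ cl1 P C := by
      intro z hz y hy
      exact hz y (fun u hu => hy u (hsub hu))
    rw [show cl1 P C = C from hC] at this
    exact this hz
  · intro h x hx v hv
    have hdx : d x ∈ diaOp P Rd A := by
      have : d x ∈ diaImg Rd A := by
        refine Set.mem_iUnion₂.mpr ⟨x, hx, ?_⟩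
        rw [hRd]
        exact fun y hy => hy
      exact fun y hy => hy _ this
    have := h hdx
    rw [← hC] at this
    exact this v hv
end

section
/- Assume: the polarity is separated; m : Z∂ → Z∂ is monotone, R□v = Γ(m v) for every v ∈ Z∂, and R□ is smooth; b : Z₁ → Z₁ satisfies {z ∈ Z₁ | ∀ p, z R''□ p → p ∈ Γx} = Γ(b x) for every x ∈ Z₁; d : Z₁ → Z₁ is monotone and R⋄x = Γ(d x) for every x ∈ Z₁. Then for every stable set A ⊆ Z₁ and every x ∈ A, one has b(d x) ∈ □(⋄A). -/
open DFML

/-- for every stable A and x ∈ A, b(d x) ∈ □(⋄A). -/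
theorem stmt16 {Z1 Zd : Type*} (P : Z1 → Zd → Prop)
    (sep : separated P)
    (m : Zd → Zd) (mMono : ∀ v v' : Zd, led P v v' → led P (m v) (m v'))
    (R : Zd → Zd → Prop) (hR : ∀ v : Zd, boxSec R v = Gamd P (m v))
    (hRsmooth : boxSmooth P R)
    (b : Z1 → Z1)
    (hb : ∀ x : Z1, {z | ∀ p : Z1, boxDD P R z p → p ∈ Gam1 P x} = Gam1 P (b x))
    (d : Z1 → Z1) (dMono : ∀ x x' : Z1, le1 P x x' → le1 P (d x) (d x'))
    (Rd : Z1 → Z1 → Prop) (hRd : ∀ x : Z1, diaSec Rd x = Gam1 P (d x)) :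
    ∀ A : Set Z1, stab P A → ∀ x ∈ A, b (d x) ∈ boxOp P R (diaOp P Rd A) := by
  intro A _ x hx
  intro w hw
  simp only [boxImg, Set.mem_iUnion] at hw
  obtain ⟨v, hv, hwv⟩ := hw
  rw [hR v] at hwv
  -- first: P (d x) v
  have hdxA : d x ∈ diaOp P Rd A := by
    intro y hy
    exact hy (d x) (Set.mem_biUnion hx (by rw [hRd x]; exact Set.Subset.refl _))
  have hdxv : P (d x) v := hv (d x) hdxA
  -- b (d x) satisfies the defining property
  have hbd : ∀ p : Z1, boxDD P R (b (d x)) p → p ∈ Gam1 P (d x) := by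
    have : b (d x) ∈ Gam1 P (b (d x)) := Set.Subset.refl _
    rw [← hb (d x)] at this
    exact this
  -- boxDual P R (b (d x)) v via smoothness
  have hS : boxDual P R (b (d x)) v := by
    have hcs := hRsmooth (b (d x))
    have hmem : v ∈ pol1 P (pol2 P {v | boxDual P R (b (d x)) v}) := by
      intro p hp
      have hle : le1 P (d x) p := hbd p hp
      exact hle (fun u hu => by cases hu; exact hdxv) p rfl
    rwa [hcs] at hmem
  -- conclude
  have hS' : b (d x) ∈ pol2 P (boxSec R v) := hS
  rw [hR v] at hS'
  have hbm : P (b (d x)) (m v) := hS' (m v) (Set.Subset.refl _)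
  exact hwv (fun u hu => by cases hu; exact hbm) w rfl
end

section
/- Assume: the polarity is separated; m : Z∂ → Z∂ is monotone, R□v = Γ(m v) for every v ∈ Z∂, and R□ is smooth; b : Z₁ → Z₁ satisfies {z ∈ Z₁ | ∀ p, z R''□ p → p ∈ Γx} = Γ(b x) for every x ∈ Z₁; d : Z₁ → Z₁ is monotone and R⋄x = Γ(d x) for every x ∈ Z₁; and (FS5) b(d x) ≼ d x for every x ∈ Z₁. Then the S5-axiom holds in the lattice of stable sets: ⋄A ⊆ □(⋄A) for every stable A ⊆ Z₁. -/
open DFML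

/-- under axiom (FS5), the S5-axiom holds on stable sets:
⋄A ⊆ □(⋄A). -/
theorem stmt17 {Z1 Zd : Type*} (P : Z1 → Zd → Prop)
    (sep : separated P)
    (m : Zd → Zd) (mMono : ∀ v v' : Zd, led P v v' → led P (m v) (m v'))
    (R : Zd → Zd → Prop) (hR : ∀ v : Zd, boxSec R v = Gamd P (m v))
    (hRsmooth : boxSmooth P R)
    (b : Z1 → Z1)
    (hb : ∀ x : Z1, {z | ∀ p : Z1, boxDD P R z p → p ∈ Gam1 P x} = Gam1 P (b x))
    (d : Z1 → Z1) (dMono : ∀ x x' : Z1, le1 P x x' → le1 P (d x) (d x'))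
    (Rd : Z1 → Z1 → Prop) (hRd : ∀ x : Z1, diaSec Rd x = Gam1 P (d x))
    (FS5 : ∀ x : Z1, le1 P (b (d x)) (d x)) :
    ∀ A : Set Z1, stab P A → diaOp P Rd A ⊆ boxOp P R (diaOp P Rd A) := by
  intro A hA z hz w hw
  rcases Set.mem_iUnion₂.mp hw with ⟨v, hv, hwv⟩
  -- v is in the polar of ⋄A, hence in the polar of ◇|A
  have hv' : v ∈ pol1 P (diaImg Rd A) := by
    intro t ht
    exact hv t (fun y hy => hy t ht)
  rw [hR] at hwv
  -- hwv : w ∈ Gamd P (m v), i.e. led P (m v) w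
  have hkey : w ∈ pol1 P (diaImg Rd A) := by
    intro x' hx'
    rcases Set.mem_iUnion₂.mp hx' with ⟨x, hx, hx'x⟩
    rw [hRd] at hx'x
    -- hx'x : le1 P (d x) x'
    have hdx : d x ∈ diaImg Rd A := by
      refine Set.mem_iUnion₂.mpr ⟨x, hx, ?_⟩
      rw [hRd]
      exact Set.Subset.refl _
    have hdv : P (d x) v := hv' (d x) hdx
    -- Step: b (d x) R'□ v, using smoothness and hb
    have hbd : boxDual P R (b (d x)) v := by
      have hc := hRsmooth (b (d x))
      have hmemcl : v ∈ pol1 P (pol2 P {v' | boxDual P R (b (d x)) v'}) := by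
        intro p hp
        have hmem : b (d x) ∈ Gam1 P (b (d x)) := Set.Subset.refl _
        rw [← hb (d x)] at hmem
        have hple : p ∈ Gam1 P (d x) := hmem p hp
        have hvdx : v ∈ pol1 P {d x} := by
          intro u hu; rw [Set.mem_singleton_iff] at hu; subst hu; exact hdv
        exact hple hvdx p rfl
      rw [hc] at hmemcl
      exact hmemcl
    -- Hence P (b (d x)) (m v)
    have hPbm : P (b (d x)) (m v) := by
      apply hbd
      rw [hR]
      exact Set.Subset.refl _
    -- FS5 gives P (d x) (m v)
    have hPdm : P (d x) (m v) := by
      have hmv : m v ∈ pol1 P {b (d x)} := by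
        intro u hu; rw [Set.mem_singleton_iff] at hu; subst hu; exact hPbm
      exact FS5 x hmv (d x) rfl
    -- w ≽ m v gives P (d x) w
    have hPdw : P (d x) w := by
      have hdm : d x ∈ pol2 P {m v} := by
        intro y hy; rw [Set.mem_singleton_iff] at hy; subst hy; exact hPdm
      exact hwv hdm w rfl
    -- x' ≽ d x gives P x' w
    have hwdx : w ∈ pol1 P {d x} := by
      intro u hu; rw [Set.mem_singleton_iff] at hu; subst hu; exact hPdw
    exact hx'x hwdx x' rfl
  exact hz w hkey
end

section
/- Canonicity of the K-axiom: let □ : L → L be monotone, → : L → L → L be antitone in its first and monotone in its second argument, and suppose □(a → b) ≤ (□a) → (□b) for all a, b ∈ L. Then for every filter x and every ideal y of L: x ▷ y := {c ∈ L | ∃ a ∈ x, ∃ b ∈ y, c ≤ a → b} and ⊟y := {c ∈ L | ∃ b ∈ y, c ≤ □b} are ideals of L, ⊟x := {e ∈ L | ∃ a ∈ x, □a ≤ e} is a filter of L, and ⊟(x ▷ y) ⊆ (⊟x) ▷ (⊟y). -/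
open DFML

/-- A filter of a lattice: a nonempty up-set closed under binary meets. -/
def IsFilt {L : Type*} [Lattice L] (F : Set L) : Prop :=
  F.Nonempty ∧ (∀ a ∈ F, ∀ b : L, a ≤ b → b ∈ F) ∧ ∀ a ∈ F, ∀ b ∈ F, a ⊓ b ∈ F

/-- An ideal of a lattice: a nonempty down-set closed under binary joins. -/
def IsIdl {L : Type*} [Lattice L] (I : Set L) : Prop :=
  I.Nonempty ∧ (∀ a ∈ I, ∀ b : L, b ≤ a → b ∈ I) ∧ ∀ a ∈ I, ∀ b ∈ I, a ⊔ b ∈ I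

/-- canonicity of the K-axiom. -/
theorem stmt19 {L : Type*} [Lattice L] [BoundedOrder L]
    (box : L → L) (imp : L → L → L)
    (boxMono : Monotone box)
    (impAnti : ∀ b : L, Antitone (fun a => imp a b))
    (impMono : ∀ a : L, Monotone (fun b => imp a b))
    (hK : ∀ a b : L, box (imp a b) ≤ imp (box a) (box b)) :
    ∀ x y : Set L, IsFilt x → IsIdl y →
      IsIdl {c | ∃ a ∈ x, ∃ b ∈ y, c ≤ imp a b} ∧
      IsIdl {c | ∃ b ∈ y, c ≤ box b} ∧
      IsFilt {e | ∃ a ∈ x, box a ≤ e} ∧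
      {c | ∃ b ∈ {c | ∃ a ∈ x, ∃ b ∈ y, c ≤ imp a b}, c ≤ box b} ⊆
        {c | ∃ a ∈ {e | ∃ a ∈ x, box a ≤ e}, ∃ b ∈ {c | ∃ b ∈ y, c ≤ box b},
          c ≤ imp a b} := by
  intro x y hx hy
  obtain ⟨⟨ax, hax⟩, hxup, hxmeet⟩ := hx
  obtain ⟨⟨by', hby⟩, hydown, hyjoin⟩ := hy
  refine ⟨⟨⟨imp ax by', ax, hax, by', hby, le_rfl⟩, ?_, ?_⟩,
    ⟨⟨box by', by', hby, le_rfl⟩, ?_, ?_⟩,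
    ⟨⟨box ax, ax, hax, le_rfl⟩, ?_, ?_⟩, ?_⟩
  · rintro c ⟨a, ha, b, hb, hc⟩ c' hc'
    exact ⟨a, ha, b, hb, hc'.trans hc⟩
  · rintro c ⟨a, ha, b, hb, hc⟩ c' ⟨a', ha', b', hb', hc'⟩
    refine ⟨a ⊓ a', hxmeet a ha a' ha', b ⊔ b', hyjoin b hb b' hb',
      sup_le (hc.trans ?_) (hc'.trans ?_)⟩
    · exact (impAnti b inf_le_left).trans ((impMono _) le_sup_left)
    · exact (impAnti b' inf_le_right).trans ((impMono _) le_sup_right)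
  · rintro c ⟨b, hb, hc⟩ c' hc'
    exact ⟨b, hb, hc'.trans hc⟩
  · rintro c ⟨b, hb, hc⟩ c' ⟨b', hb', hc'⟩
    exact ⟨b ⊔ b', hyjoin b hb b' hb',
      sup_le (hc.trans (boxMono le_sup_left)) (hc'.trans (boxMono le_sup_right))⟩
  · rintro e ⟨a, ha, he⟩ e' hee'
    exact ⟨a, ha, he.trans hee'⟩
  · rintro e ⟨a, ha, he⟩ e' ⟨a', ha', he'⟩
    exact ⟨a ⊓ a', hxmeet a ha a' ha',
      le_inf ((boxMono inf_le_left).trans he) ((boxMono inf_le_right).trans he')⟩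
  · rintro c ⟨d, ⟨a, ha, b, hb, hd⟩, hc⟩
    exact ⟨box a, ⟨a, ha, le_rfl⟩, box b, ⟨b, hb, le_rfl⟩,
      hc.trans ((boxMono hd).trans (hK a b))⟩
end
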